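/- Let d_μ(x) = max(μ − x, 0) for a fixed integer μ ≥ 0, and let x, y be integers with d_μ(x) + d_μ(y) ≥ 1. Then d_μ(⌊(x+y)/2⌋)² + d_μ(⌈(x+y)/2⌉)² ≤ d_μ(x)² + d_μ(y)². -/

import Mathlib

lemma key17 (m f c x y : ℤ) (hs : f + c = x + y) (h1 : x ≤ f) (h2 : f ≤ c) (h3 : c ≤ y) :
    (max (m - f) 0) ^ 2 + (max (m - c) 0) ^ 2 ≤ (max (m - x) 0) ^ 2 + (max (m - y) 0) ^ 2 := by
  rcases le_total (m - f) 0 with hf | hf <;>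
  rcases le_total (m - c) 0 with hc | hc <;>
  rcases le_total (m - x) 0 with hx | hx <;>
  rcases le_total (m - y) 0 with hy | hy <;>
  simp only [max_eq_left, max_eq_right, hf, hc, hx, hy] <;>
  nlinarith [sq_nonneg (m - f), sq_nonneg (m - c), sq_nonneg (m - x), sq_nonneg (m - y)]

theorem stmt_17 (μ : ℕ) (x y : ℤ)
    (d : ℤ → ℤ) (hd : ∀ z, d z = max ((μ : ℤ) - z) 0)
    (hxy : 1 ≤ d x + d y) :
    d ⌊((x : ℚ) + y) / 2⌋ ^ 2 + d ⌈((x : ℚ) + y) / 2⌉ ^ 2 ≤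
      d x ^ 2 + d y ^ 2 := by
  have e : ((x : ℚ) + y) / 2 = ((x + y : ℤ) : ℚ) / ((2 : ℕ) : ℚ) := by push_cast; ring
  have hf : ⌊((x : ℚ) + y) / 2⌋ = (x + y) / 2 := by
    rw [e, Rat.floor_intCast_div_natCast]; norm_num
  have hc : ⌈((x : ℚ) + y) / 2⌉ = -((-(x + y)) / 2) := by
    rw [show (⌈((x : ℚ) + y) / 2⌉ : ℤ) = -⌊-(((x : ℚ) + y) / 2)⌋ by rw [Int.floor_neg, neg_neg], show -(((x : ℚ) + y) / 2) = ((-(x+y) : ℤ) : ℚ) / ((2:ℕ):ℚ) by push_cast; ring,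
      Rat.floor_intCast_div_natCast]; norm_num
  rw [hf, hc, hd, hd, hd, hd]
  rcases le_total x y with h | h
  · exact key17 _ _ _ _ _ (by omega) (by omega) (by omega) (by omega)
  · have := key17 (μ : ℤ) ((x+y)/2) (-((-(x+y))/2)) y x (by omega) (by omega) (by omega) (by omega)
    linarith
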